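/- Let Z be a Banach space, p ∈ (1,∞), and let f : [0,∞) → Z be a function belonging to L²(0,∞;Z) (i.e. strongly measurable with ∫_0^∞ ‖f(s)‖_Z² ds < ∞) which is locally absolutely continuous, with an a.e. derivative f' satisfying sup_{t ∈ [0,∞)} (∫_t^{t+1} ‖f'(s)‖_Z^p ds)^{1/p} < ∞. Then f(t) → 0 strongly in Z as t → ∞, i.e. ‖f(t)‖_Z → 0. -/

import Mathlib

/-!
By Hölder's inequality, `‖f t - f s‖ ≤ M (t - s) ^ (1 - 1/p)` whenever `0 ≤ s ≤ t ≤ s + 1`, so `f`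
is uniformly continuous on `[0, ∞)`. A uniformly continuous function with `‖f‖²` integrable
tends to zero (Barbalat): if `‖f t‖ ≥ ε` for arbitrarily large `t`, then `‖f‖ ≥ ε / 2` on
`[t, t + δ]` with `δ` independent of `t`, so `∫ₜ^{t+δ} ‖f‖² ≥ δ ε² / 4`, while these tail
integrals of an integrable function tend to zero.
-/

open MeasureTheory Set Filter Topology

section

variable {E : Type*} [NormedAddCommGroup E]

theorem integral_norm_le_integral_norm_rpow_mul_measureReal {α : Type*} [MeasurableSpace α]
    {μ : Measure α} [IsFiniteMeasure μ] {g : α → E} {p : ℝ} (hp : 1 < p)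
    (hg : AEStronglyMeasurable g μ) (hgp : Integrable (fun x => ‖g x‖ ^ p) μ) :
    ∫ x, ‖g x‖ ∂μ ≤ (∫ x, ‖g x‖ ^ p ∂μ) ^ (1 / p) * μ.real univ ^ (1 - 1 / p) := by
  have hpq := Real.HolderConjugate.conjExponent hp
  have hp0 : 0 < p := hpq.pos
  have hg_mem : MemLp g (ENNReal.ofReal p) μ := by
    rw [← integrable_norm_rpow_iff hg (by simpa using hp0) ENNReal.ofReal_ne_top,
      ENNReal.toReal_ofReal hp0.le]
    exact hgp
  have := integral_mul_le_Lp_mul_Lq_of_nonneg hpq (ae_of_all _ fun x => norm_nonneg (g x))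
    (ae_of_all _ fun _ => zero_le_one) hg_mem.norm (memLp_const 1)
  simpa [hpq.one_sub_inv] using this

theorem norm_intervalIntegral_le_integral_norm_rpow_mul [NormedSpace ℝ E] {g : ℝ → E}
    {p a b : ℝ} (hp : 1 < p) (hab : a ≤ b)
    (hg : AEStronglyMeasurable g (volume.restrict (Ioc a b)))
    (hgp : IntervalIntegrable (fun x => ‖g x‖ ^ p) volume a b) :
    ‖∫ x in a..b, g x‖ ≤ (∫ x in a..b, ‖g x‖ ^ p) ^ (1 / p) * (b - a) ^ (1 - 1 / p) := by
  calc ‖∫ x in a..b, g x‖ ≤ ∫ x in a..b, ‖g x‖ :=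
        intervalIntegral.norm_integral_le_integral_norm hab
    _ ≤ _ := by
      rw [intervalIntegral.integral_of_le hab, intervalIntegral.integral_of_le hab]
      simpa [hab] using
        integral_norm_le_integral_norm_rpow_mul_measureReal hp hg hgp.1

theorem norm_sub_le_mul_rpow_of_eq_intervalIntegral [NormedSpace ℝ E] {f f' : ℝ → E}
    {p M s t u : ℝ} (hp : 1 < p) (hst : s ≤ t) (htu : t ≤ u)
    (hFTC : f t - f s = ∫ r in s..t, f' r)
    (hf' : AEStronglyMeasurable f' (volume.restrict (Ioc s t)))
    (hf'p : IntervalIntegrable (fun r => ‖f' r‖ ^ p) volume s u)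
    (hM : (∫ r in s..u, ‖f' r‖ ^ p) ^ (1 / p) ≤ M) :
    ‖f t - f s‖ ≤ M * (t - s) ^ (1 - 1 / p) := by
  have hpos : ∀ r, 0 ≤ ‖f' r‖ ^ p := fun r => by positivity
  have hmono : ∫ r in s..t, ‖f' r‖ ^ p ≤ ∫ r in s..u, ‖f' r‖ ^ p :=
    intervalIntegral.integral_mono_interval le_rfl hst htu (ae_of_all _ hpos) hf'p
  have hst_int : IntervalIntegrable (fun r => ‖f' r‖ ^ p) volume s t :=
    hf'p.mono_set (uIcc_subset_uIcc left_mem_uIcc (mem_uIcc_of_le hst htu))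
  rw [hFTC]
  calc ‖∫ r in s..t, f' r‖ ≤ (∫ r in s..t, ‖f' r‖ ^ p) ^ (1 / p) * (t - s) ^ (1 - 1 / p) :=
        norm_intervalIntegral_le_integral_norm_rpow_mul hp hst hf' hst_int
    _ ≤ M * (t - s) ^ (1 - 1 / p) := by
        refine mul_le_mul_of_nonneg_right (le_trans ?_ hM) (Real.rpow_nonneg (sub_nonneg.2 hst) _)
        exact Real.rpow_le_rpow (intervalIntegral.integral_nonneg hst fun r _ => hpos r) hmono
          (by positivity)

theorem uniformContinuousOn_of_dist_le_mul_rpow {X Y : Type*} [PseudoMetricSpace X]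
    [PseudoMetricSpace Y] {f : X → Y} {s : Set X} {C α : ℝ} (hC : 0 ≤ C) (hα : 0 < α)
    (h : ∀ x ∈ s, ∀ y ∈ s, dist x y ≤ 1 → dist (f x) (f y) ≤ C * dist x y ^ α) :
    UniformContinuousOn f s := by
  refine Metric.uniformContinuousOn_iff_le.2 fun ε hε => ?_
  refine ⟨min 1 ((ε / (C + 1)) ^ (1 / α)), lt_min one_pos (by positivity),
    fun x hx y hy hxy => ?_⟩
  calc dist (f x) (f y) ≤ C * dist x y ^ α := h x hx y hy (hxy.trans (min_le_left _ _))
    _ ≤ (C + 1) * ((ε / (C + 1)) ^ (1 / α)) ^ α := by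
      gcongr
      · linarith
      · exact hxy.trans (min_le_right _ _)
    _ = ε := by
      rw [← Real.rpow_mul (by positivity), one_div_mul_cancel hα.ne', Real.rpow_one]
      field_simp

theorem tendsto_intervalIntegral_add_const_atTop_zero {g : ℝ → E} [NormedSpace ℝ E] {a : ℝ}
    (hg : IntegrableOn g (Ioi a)) (δ : ℝ) :
    Tendsto (fun T => ∫ x in T..T + δ, g x) atTop (𝓝 0) := by
  have hii : ∀ b, a ≤ b → IntervalIntegrable g volume a b := fun b hb =>
    (intervalIntegrable_iff_integrableOn_Ioc_of_le hb).2 (hg.mono_set Ioc_subset_Ioi_self)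
  have hlim := intervalIntegral_tendsto_integral_Ioi a hg tendsto_id
  have hlim_δ := intervalIntegral_tendsto_integral_Ioi a hg
    (tendsto_atTop_add_const_right _ δ tendsto_id)
  have hdiff := hlim_δ.sub hlim
  rw [sub_self] at hdiff
  simp only [id] at hdiff
  refine hdiff.congr' ?_
  filter_upwards [eventually_ge_atTop (a + |δ|)] with T hT
  exact intervalIntegral.integral_interval_sub_left
    (hii _ (by linarith [neg_abs_le δ, abs_nonneg δ])) (hii _ (by linarith [abs_nonneg δ]))

theorem tendsto_norm_atTop_zero_of_uniformContinuousOn_of_integrableOn_pow {f : ℝ → E} {a : ℝ}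
    (n : ℕ) (hf : UniformContinuousOn f (Ici a))
    (hfn : IntegrableOn (fun x => ‖f x‖ ^ n) (Ioi a)) :
    Tendsto (fun t => ‖f t‖) atTop (𝓝 0) := by
  refine Metric.tendsto_atTop.2 fun ε hε => ?_
  obtain ⟨δ, hδ, hfδ⟩ := Metric.uniformContinuousOn_iff_le.1 hf (ε / 2) (by positivity)
  obtain ⟨T, hT⟩ := eventually_atTop.1 <|
    (tendsto_intervalIntegral_add_const_atTop_zero hfn δ).eventually_lt_const
      (by positivity : 0 < δ * (ε / 2) ^ n)
  refine ⟨max T a, fun t ht => ?_⟩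
  have hta : a ≤ t := le_of_max_le_right ht
  rw [dist_zero_right, norm_norm]
  by_contra! hεt
  have hlower : ∀ x ∈ Icc t (t + δ), (ε / 2) ^ n ≤ ‖f x‖ ^ n := by
    intro x hx
    have hdist : dist t x ≤ δ := by
      rw [Real.dist_eq, abs_sub_comm, abs_of_nonneg (by linarith [hx.1])]
      linarith [hx.2]
    have hclose := hfδ t hta x (hta.trans hx.1) hdist
    rw [dist_eq_norm] at hclose
    have hrev := norm_sub_norm_le (f t) (f x)
    exact pow_le_pow_left₀ (by positivity) (by linarith) n
  have hint : δ * (ε / 2) ^ n ≤ ∫ x in t..t + δ, ‖f x‖ ^ n := by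
    have := intervalIntegral.integral_mono_on (by linarith) intervalIntegrable_const
      ((intervalIntegrable_iff_integrableOn_Ioc_of_le (by linarith)).2
        (hfn.mono_set (Ioc_subset_Ioi_self.trans (Ioi_subset_Ioi hta)))) hlower
    simpa using this
  exact (hint.trans_lt (hT t (le_of_max_le_left ht))).false

end

theorem tendsto_zero_of_L2_and_uniform_Lp_derivative_general
    {Z : Type*} [NormedAddCommGroup Z] [NormedSpace ℝ Z]
    (f f' : ℝ → Z) (p : ℝ) (hp : 1 < p)
    (hfL2 : MeasureTheory.IntegrableOn (fun s => ‖f s‖ ^ 2) (Set.Ioi (0:ℝ)))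
    (hf'_loc : ∀ t ≥ (0:ℝ), MeasureTheory.IntegrableOn f' (Set.Icc 0 t))
    (hFTC : ∀ s t : ℝ, 0 ≤ s → s ≤ t → f t - f s = ∫ r in s..t, f' r)
    (hf'p_int : ∀ t ≥ (0:ℝ),
      MeasureTheory.IntegrableOn (fun s => ‖f' s‖ ^ p) (Set.Icc t (t+1)))
    (M : ℝ)
    (hM : ∀ t ≥ (0:ℝ), (∫ s in t..(t+1), ‖f' s‖ ^ p) ^ (1/p) ≤ M) :
    Filter.Tendsto (fun t => ‖f t‖) Filter.atTop (nhds 0) := by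
  have hM0 : 0 ≤ M := le_trans (Real.rpow_nonneg
    (intervalIntegral.integral_nonneg (by norm_num) fun s _ => by positivity) _) (hM 0 le_rfl)
  have hlocal : ∀ s t, 0 ≤ s → s ≤ t → t ≤ s + 1 → ‖f t - f s‖ ≤ M * (t - s) ^ (1 - 1 / p) :=
    fun s t hs hst hts => norm_sub_le_mul_rpow_of_eq_intervalIntegral hp hst hts (hFTC s t hs hst)
      ((hf'_loc (s + 1) (by linarith)).mono_set
        (Ioc_subset_Icc_self.trans (Icc_subset_Icc hs hts))).aestronglyMeasurable
      ((intervalIntegrable_iff_integrableOn_Icc_of_le (by linarith)).2 (hf'p_int s hs)) (hM s hs)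
  have hunif : UniformContinuousOn f (Ici 0) := by
    refine uniformContinuousOn_of_dist_le_mul_rpow hM0
      (sub_pos.2 ((div_lt_one (by linarith)).2 hp)) fun x hx y hy hxy => ?_
    wlog hle : x ≤ y generalizing x y
    · rw [dist_comm, dist_comm x] at *
      exact this y hy x hx hxy (le_of_not_ge hle)
    have hdist : dist x y = y - x := by
      rw [dist_comm, Real.dist_eq, abs_of_nonneg (sub_nonneg.2 hle)]
    rw [hdist] at hxy ⊢
    rw [dist_comm, dist_eq_norm]
    exact hlocal x y hx hle (by linarith)
  exact tendsto_norm_atTop_zero_of_uniformContinuousOn_of_integrableOn_pow 2 hunif hfL2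

/-- If `f ∈ L²(0, ∞; Z)` is locally absolutely continuous with a.e. derivative
`f'` whose `L^p(t, t+1; Z)` norms are uniformly bounded in `t ≥ 0` for some
`p ∈ (1, ∞)`, then `f(t) → 0` strongly in `Z` as `t → ∞`. -/
theorem tendsto_zero_of_L2_and_uniform_Lp_derivative
    {Z : Type*} [NormedAddCommGroup Z] [NormedSpace ℝ Z] [CompleteSpace Z]
    (f f' : ℝ → Z) (p : ℝ) (hp : 1 < p)
    (hf_meas : MeasureTheory.AEStronglyMeasurable f
      (MeasureTheory.volume.restrict (Set.Ioi (0:ℝ))))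
    (hfL2 : MeasureTheory.IntegrableOn (fun s => ‖f s‖ ^ 2) (Set.Ioi (0:ℝ)))
    (hf'_loc : ∀ t ≥ (0:ℝ), MeasureTheory.IntegrableOn f' (Set.Icc 0 t))
    (hFTC : ∀ s t : ℝ, 0 ≤ s → s ≤ t → f t - f s = ∫ r in s..t, f' r)
    (hf'p_int : ∀ t ≥ (0:ℝ),
      MeasureTheory.IntegrableOn (fun s => ‖f' s‖ ^ p) (Set.Icc t (t+1)))
    (M : ℝ)
    (hM : ∀ t ≥ (0:ℝ), (∫ s in t..(t+1), ‖f' s‖ ^ p) ^ (1/p) ≤ M) :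
    Filter.Tendsto (fun t => ‖f t‖) Filter.atTop (nhds 0) :=
  tendsto_zero_of_L2_and_uniform_Lp_derivative_general f f' p hp hfL2 hf'_loc hFTC hf'p_int M hM
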